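/- Let σ ∈ S_p have cycle decomposition σ = c₁ ⊔ ⋯ ⊔ c_k with cycle c_i supported on the set A_i. Then a permutation α satisfies α ≤ σ (in the geodesic order) if and only if α = α₁ ⊔ ⋯ ⊔ α_k with α_i supported on A_i and α_i ≤ c_i for each i. Moreover, elements of {α : α ≤ σ} are uniquely determined by their cycle-type partition: if α ≤ σ, α' ≤ σ and the set partitions into orbits of α and α' coincide, then α = α'. -/

import Mathlib

/-- The length `|σ|` of a permutation: the minimal number of transpositions whose
product equals `σ`. -/
noncomputable def permLength {α : Type*} [DecidableEq α] [Fintype α] (σ : Equiv.Perm α) : ℕ :=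
  sInf {n | ∃ l : List (Equiv.Perm α), l.length = n ∧ (∀ τ ∈ l, τ.IsSwap) ∧ l.prod = σ}

/-- The geodesic order: `α ≤ β` iff `|α| + |α⁻¹β| = |β|`. -/
def geoLe {α : Type*} [DecidableEq α] [Fintype α] (σ τ : Equiv.Perm α) : Prop :=
  permLength σ + permLength (σ⁻¹ * τ) = permLength τ

open Equiv Equiv.Perm Finset

variable {G : Type*} [DecidableEq G] [Fintype G]

/-- sum over cycles of (length - 1). -/
noncomputable def cycSum (σ : Equiv.Perm G) : ℕ :=
  ∑ c ∈ σ.cycleFactorsFinset, (c.support.card - 1)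

lemma exists_swap_list (σ : Perm G) :
    ∃ l : List (Perm G), l.length = permLength σ ∧ (∀ τ ∈ l, τ.IsSwap) ∧ l.prod = σ := by
  have hne : {n | ∃ l : List (Perm G), l.length = n ∧ (∀ τ ∈ l, τ.IsSwap) ∧ l.prod = σ}.Nonempty := by
    obtain ⟨l, hl, hsw⟩ := (truncSwapFactors σ).out
    exact ⟨l.length, l, rfl, hsw, hl⟩
  exact Nat.sInf_mem hne

lemma permLength_le {σ : Perm G} {l : List (Perm G)} (h1 : ∀ τ ∈ l, τ.IsSwap)
    (h2 : l.prod = σ) : permLength σ ≤ l.length :=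
  Nat.sInf_le ⟨l, rfl, h1, h2⟩

lemma permLength_one : permLength (1 : Perm G) = 0 :=
  Nat.le_zero.mp (permLength_le (l := []) (by simp) (by simp))

lemma permLength_mul_le (σ τ : Perm G) :
    permLength (σ * τ) ≤ permLength σ + permLength τ := by
  obtain ⟨l1, h1, h1s, h1p⟩ := exists_swap_list σ
  obtain ⟨l2, h2, h2s, h2p⟩ := exists_swap_list τ
  have := permLength_le (σ := σ * τ) (l := l1 ++ l2) ?_ ?_
  · simpa [h1, h2] using this
  · intro t ht; rcases List.mem_append.mp ht with h | h
    · exact h1s t h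
    · exact h2s t h
  · simp [h1p, h2p]

lemma permLength_triangle (σ τ : Perm G) :
    permLength τ ≤ permLength σ + permLength (σ⁻¹ * τ) := by
  simpa using permLength_mul_le σ (σ⁻¹ * τ)

lemma cycSum_one : cycSum (1 : Perm G) = 0 := by
  simp [cycSum, cycleFactorsFinset_one]

lemma isCycle_cycSum {c : Perm G} (hc : c.IsCycle) : cycSum c = c.support.card - 1 := by
  simp [cycSum, hc.cycleFactorsFinset_eq_singleton]

lemma cycSum_mul_of_disjoint {a b : Perm G} (h : a.Disjoint b) :
    cycSum (a * b) = cycSum a + cycSum b := by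
  rw [cycSum, h.cycleFactorsFinset_mul_eq_union, Finset.sum_union h.disjoint_cycleFactorsFinset]
  rfl

lemma cycSum_pos {σ : Perm G} (h : σ ≠ 1) : 0 < cycSum σ := by
  have hne : σ.cycleFactorsFinset.Nonempty := by
    rw [Finset.nonempty_iff_ne_empty, Ne, cycleFactorsFinset_eq_empty_iff]; exact h
  obtain ⟨c, hc⟩ := hne
  have h2 : 2 ≤ c.support.card := (mem_cycleFactorsFinset_iff.mp hc).1.two_le_card_support
  calc 0 < c.support.card - 1 := by omega
    _ ≤ cycSum σ :=
      Finset.single_le_sum (f := fun d => d.support.card - 1) (fun i _ => Nat.zero_le _) hc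

lemma cycSum_peel {σ c : Perm G} (hc : c ∈ σ.cycleFactorsFinset) :
    cycSum σ = cycSum (σ * c⁻¹) + (c.support.card - 1) := by
  rw [cycSum, cycSum, cycleFactorsFinset_mul_inv_mem_eq_sdiff hc,
    Finset.sdiff_singleton_eq_erase, ← Finset.sum_erase_add _ _ hc]



/-- Inserting a fixed point into a cycle yields a cycle. -/
lemma insert_isCycle {c : Perm G} (hc : c.IsCycle) {a b : G} (ha : a ∉ c.support)
    (hb : b ∈ c.support) :
    (Equiv.swap a b * c).IsCycle ∧ (Equiv.swap a b * c).support = insert a c.support := by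
  have hca : c a = a := by simpa using ha
  have hab : a ≠ b := fun h => ha (h ▸ hb)
  set d := Equiv.swap a b * c with hd
  have hda : d a = b := by
    simp [hd, hca, Equiv.swap_apply_left]
  have hmem : ∀ x, x ∈ c.support → c x ≠ a := by
    intro x hx hcx
    have : x = a := c.injective (by rw [hcx, hca])
    exact (ne_of_mem_of_not_mem hx ha) this
  have hsupp : d.support = insert a c.support := by
    ext x
    rcases eq_or_ne x a with rfl | hxa
    · simp [mem_support, hda, Ne.symm hab]
    · simp only [Finset.mem_insert, hxa, false_or, mem_support, hd]
      by_cases hx : x ∈ c.support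
      · have h1 : c x ≠ a := hmem x hx
        constructor
        · intro _; exact mem_support.mp hx
        · intro _
          rcases eq_or_ne (c x) b with h2 | h2
          · simp only [mul_apply, h2, Equiv.swap_apply_right]
            exact Ne.symm hxa
          · simp only [mul_apply, Equiv.swap_apply_of_ne_of_ne h1 h2]
            exact mem_support.mp hx
      · have hcx : c x = x := by simpa using hx
        have hxb : x ≠ b := fun h => hx (h ▸ hb)
        simp [mul_apply, hcx, Equiv.swap_apply_of_ne_of_ne hxa hxb, hx]
  refine ⟨⟨a, by rw [hda]; exact Ne.symm hab, ?_⟩, hsupp⟩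
  intro y hy
  have hy' : y ∈ d.support := mem_support.mpr hy
  rw [hsupp, Finset.mem_insert] at hy'
  rcases hy' with rfl | hy'
  · exact SameCycle.refl _ _
  -- y ∈ c.support : find n with d^n a = y
  have hbsupp : c b ≠ b := mem_support.mp hb
  have hyb : c y ≠ y := mem_support.mp hy'
  obtain ⟨i, hi⟩ : ∃ i : ℕ, (c ^ i) b = y := by
    obtain ⟨i, _, hi⟩ := (hc.sameCycle hbsupp hyb).exists_pow_eq_of_mem_support hb
    exact ⟨i, hi⟩
  -- take minimal i
  have hex : ∃ i : ℕ, (c ^ i) b = y := ⟨i, hi⟩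
  set i0 := Nat.find hex with hi0
  have hi0y : (c ^ i0) b = y := Nat.find_spec hex
  have hnotb : ∀ j, 0 < j → j ≤ i0 → (c ^ j) b ≠ b := by
    intro j hj hji hcb
    have h5 : (c ^ (i0 - j + j)) b = y := by rw [Nat.sub_add_cancel hji, hi0y]
    rw [pow_add, mul_apply, hcb] at h5
    exact Nat.find_min hex (by omega) h5
  have key : ∀ j ≤ i0, (d ^ (j + 1)) a = (c ^ j) b := by
    intro j hj
    induction j with
    | zero => simpa using hda
    | succ n ih =>
      have hn : n ≤ i0 := by omega
      have h1 : (d ^ (n + 1 + 1)) a = d ((c ^ n) b) := by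
        rw [pow_succ', mul_apply, ih hn]
      rw [h1, hd, mul_apply]
      have h2 : c ((c ^ n) b) = (c ^ (n + 1)) b := by
        rw [pow_succ', mul_apply]
      rw [h2]
      have h3 : (c ^ (n + 1)) b ≠ a := by
        intro h
        exact (ne_of_mem_of_not_mem (by rw [← h] at ha ⊢; exact pow_apply_mem_support.mpr hb) ha) rfl
      have h4 : (c ^ (n + 1)) b ≠ b := hnotb (n + 1) (by omega) (by omega)
      exact Equiv.swap_apply_of_ne_of_ne h3 h4
  have : (d ^ (i0 + 1)) a = y := by rw [key i0 le_rfl, hi0y]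
  exact ⟨(i0 + 1 : ℕ), by rw [zpow_natCast, this]⟩


lemma cycSum_swap {a b : G} (hab : a ≠ b) : cycSum (Equiv.swap a b) = 1 := by
  rw [isCycle_cycSum (isCycle_swap hab), card_support_swap hab]

/-- merging a fixed point: cycSum goes up by 1. -/
lemma cycSum_swap_mul_of_fixed {τ : Perm G} {a b : G} (hfix : τ a = a) (hab : a ≠ b) :
    cycSum (Equiv.swap a b * τ) = cycSum τ + 1 := by
  have ha : a ∉ τ.support := by simp [hfix]
  by_cases hb : b ∈ τ.support
  · -- insert a into the cycle of b
    set c := τ.cycleOf b with hcdef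
    have hcmem : c ∈ τ.cycleFactorsFinset := cycleOf_mem_cycleFactorsFinset_iff.mpr hb
    have hccyc : c.IsCycle := isCycle_cycleOf τ (mem_support.mp hb)
    have hbc : b ∈ c.support := by
      rw [hcdef, mem_support_cycleOf_iff]
      exact ⟨SameCycle.refl _ _, hb⟩
    have hac : a ∉ c.support := fun h => ha (support_cycleOf_le τ b h)
    set r := τ * c⁻¹ with hrdef
    have hdisj : r.Disjoint c := disjoint_mul_inv_of_mem_cycleFactorsFinset hcmem
    have hτ : τ = r * c := by rw [hrdef, inv_mul_cancel_right]
    have hrsupp : _root_.Disjoint r.support c.support := disjoint_iff_disjoint_support.mp hdisj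
    have har : a ∉ r.support := by
      intro h
      have : a ∈ τ.support := by
        rw [hτ, (hdisj.support_mul)]; exact Finset.mem_union_left _ h
      exact ha this
    have hbr : b ∉ r.support := fun h => (Finset.disjoint_left.mp hrsupp h) hbc
    have hcomm : Commute (Equiv.swap a b) r := by
      apply Perm.Disjoint.commute
      rw [disjoint_iff_disjoint_support, support_swap hab]
      intro s hs hs2
      rw [Finset.le_iff_subset, Finset.subset_iff] at *
      intro x hx
      have hx2 := hs hx
      simp only [Finset.mem_insert, Finset.mem_singleton] at hx2
      rcases hx2 with rfl | rfl
      · exact absurd (hs2 hx) har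
      · exact absurd (hs2 hx) hbr
    obtain ⟨hins, hins_supp⟩ := insert_isCycle hccyc hac hbc
    have hstep : Equiv.swap a b * τ = r * (Equiv.swap a b * c) := by
      rw [hτ, ← mul_assoc, hcomm.eq, mul_assoc]
    have hdisj2 : r.Disjoint (Equiv.swap a b * c) := by
      rw [disjoint_iff_disjoint_support, hins_supp, Finset.disjoint_insert_right]
      exact ⟨har, hrsupp⟩
    rw [hstep, cycSum_mul_of_disjoint hdisj2, isCycle_cycSum hins, hins_supp,
      Finset.card_insert_of_notMem hac]
    have hτsum : cycSum τ = cycSum r + (c.support.card - 1) := by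
      rw [cycSum_peel hcmem, ← hrdef]
    have hpos : 0 < c.support.card := Finset.card_pos.mpr ⟨b, hbc⟩
    omega
  · -- swap is disjoint from τ
    have hdisj : (Equiv.swap a b).Disjoint τ := by
      rw [disjoint_iff_disjoint_support, support_swap hab, Finset.disjoint_insert_left,
        Finset.disjoint_singleton_left]
      exact ⟨ha, hb⟩
    rw [cycSum_mul_of_disjoint hdisj, cycSum_swap hab]
    omega

/-- removing an adjacent pair from a cycle: cycSum goes down by 1. -/
lemma cycSum_swap_adj {c : Perm G} (hc : c.IsCycle) {u : G} (hu : u ∈ c.support) :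
    cycSum (Equiv.swap u (c u) * c) + 1 = c.support.card - 1 := by
  have hu' : c u ≠ u := mem_support.mp hu
  have h2 : 2 ≤ c.support.card := hc.two_le_card_support
  by_cases hcc : c (c u) = u
  · have hswap : c = Equiv.swap u (c u) := hc.eq_swap_of_apply_apply_eq_self hu' hcc
    have : Equiv.swap u (c u) * c = 1 := by
      nth_rewrite 2 [hswap]; rw [Equiv.swap_mul_self]
    rw [this, cycSum_one]
    have : c.support.card = 2 := by rw [hswap]; exact card_support_swap (Ne.symm hu')
    omega
  · have hcyc : (Equiv.swap u (c u) * c).IsCycle := hc.swap_mul hu' hcc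
    have hsupp : (Equiv.swap u (c u) * c).support = c.support \ {u} :=
      support_swap_mul_eq c u hcc
    rw [isCycle_cycSum hcyc, hsupp, Finset.card_sdiff_of_subset (by simpa using hu)]
    simp only [Finset.card_singleton]
    omega

/-- splitting a cycle with a swap of two of its points: cycSum goes down by 1. -/
lemma cycSum_swap_cycle : ∀ k : ℕ, ∀ {c : Perm G} {u v : G}, c.IsCycle → u ∈ c.support →
    (c ^ k) u = v → v ≠ u → cycSum (Equiv.swap u v * c) + 1 = c.support.card - 1 := by
  intro k
  induction k using Nat.strong_induction_on with
  | _ k IH =>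
  intro c u v hc hu hk hvu
  have hkpos : 0 < k := by
    rcases Nat.eq_zero_or_pos k with rfl | h
    · simp at hk; exact absurd hk.symm hvu
    · exact h
  have hex : ∃ j, 0 < j ∧ (c ^ j) u = v := ⟨k, hkpos, hk⟩
  set k0 := Nat.find hex with hk0
  obtain ⟨hk0pos, hk0v⟩ := Nat.find_spec hex
  rcases lt_or_ge k0 k with hlt | hge
  · exact IH k0 hlt hc hu hk0v hvu
  · have hk0k : k0 = k := le_antisymm (by rw [hk0]; exact Nat.find_le ⟨hkpos, hk⟩) hge
    have hmin : ∀ j, 0 < j → j < k → (c ^ j) u ≠ v := by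
      intro j hj hjk hcv
      exact Nat.find_min hex (by omega) ⟨hj, hcv⟩
    have hfix : ∀ j, 0 < j → j < k → (c ^ j) u ≠ u := by
      intro j hj hjk hju
      apply hmin (k - j) (by omega) (by omega)
      have : (c ^ (k - j + j)) u = v := by rw [Nat.sub_add_cancel (by omega), hk]
      rwa [pow_add, mul_apply, hju] at this
    have hu' : c u ≠ u := mem_support.mp hu
    by_cases hv1 : v = c u
    · rw [hv1]; exact cycSum_swap_adj hc hu
    · -- inductive case
      set w := c u with hwdef
      have hw : w ∈ c.support := apply_mem_support.mpr hu
      have hwu : w ≠ u := hu'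
      have hvsupp : v ∈ c.support := hk ▸ pow_apply_mem_support.mpr hu
      have hk2 : 2 ≤ k := by
        by_contra h
        have hk1 : k = 1 := by omega
        rw [hk1, pow_one] at hk
        exact hv1 hk.symm
      have hcc : c w ≠ u := by
        intro hccu
        have hswap : c = Equiv.swap u (c u) := hc.eq_swap_of_apply_apply_eq_self hu' hccu
        rw [hswap, support_swap hu'.symm] at hvsupp
        simp only [Finset.mem_insert, Finset.mem_singleton] at hvsupp
        rcases hvsupp with rfl | rfl
        · exact hvu rfl
        · exact hv1 rfl
      set e := Equiv.swap u w * c with hedef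
      have hecyc : e.IsCycle := hc.swap_mul hu' hcc
      have hesupp : e.support = c.support \ {u} := support_swap_mul_eq c u hcc
      have hwe : w ∈ e.support := by rw [hesupp]; exact Finset.mem_sdiff.mpr ⟨hw, by simpa using hwu⟩
      have hvw : v ≠ w := hv1
      have heu : e u = u := by rw [hedef, mul_apply, ← hwdef, Equiv.swap_apply_right]
      have claim : ∀ i ≤ k - 2, (e ^ i) w = (c ^ (i + 1)) u := by
        intro i hi
        induction i with
        | zero => simp [hwdef]
        | succ n ihn =>
          have hn : n ≤ k - 2 := by omega
          rw [pow_succ', mul_apply, ihn hn, hedef, mul_apply]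
          have h1 : c ((c ^ (n + 1)) u) = (c ^ (n + 2)) u := by
            rw [← mul_apply, ← pow_succ']
          rw [h1]
          have h2 : (c ^ (n + 2)) u ≠ u := hfix (n + 2) (by omega) (by omega)
          have h3 : (c ^ (n + 2)) u ≠ w := by
            intro h
            have : (c ^ (n + 1)) u = u := by
              apply c.injective
              rw [← mul_apply, ← pow_succ', h, hwdef]
            exact hfix (n + 1) (by omega) (by omega) this
          have := Equiv.swap_apply_of_ne_of_ne h2 h3
          rw [this]
      have hev : (e ^ (k - 1)) w = v := by
        have h0 : (e ^ (k - 2 + 1)) w = v := by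
          rw [pow_succ', mul_apply, claim (k - 2) le_rfl, hedef, mul_apply]
          have h2 : c ((c ^ (k - 2 + 1)) u) = (c ^ (k - 2 + 1 + 1)) u := by
            rw [← mul_apply, ← pow_succ']
          rw [h2, show k - 2 + 1 + 1 = k by omega, hk]
          exact Equiv.swap_apply_of_ne_of_ne hvu hvw
        rwa [show k - 2 + 1 = k - 1 by omega] at h0
      have hIH := IH (k - 1) (by omega) hecyc hwe hev hvw
      have hecard : e.support.card = c.support.card - 1 := by
        rw [hesupp, Finset.card_sdiff_of_subset (by simpa using hu)]
        simp
      -- algebra: swap u v * c = swap u w * (swap w v * e)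
      have halg : Equiv.swap u v * c = Equiv.swap u w * (Equiv.swap w v * e) := by
        have h1 : Equiv.swap w u * Equiv.swap v w * Equiv.swap w u = Equiv.swap u v :=
          swap_mul_swap_mul_swap hvw hvu
        rw [Equiv.swap_comm w u, Equiv.swap_comm v w] at h1
        rw [hedef, ← mul_assoc, ← mul_assoc, h1]
      have hfixu : (Equiv.swap w v * e) u = u := by
        rw [mul_apply, heu]
        exact Equiv.swap_apply_of_ne_of_ne hwu.symm hvu.symm
      have hM0 := cycSum_swap_mul_of_fixed hfixu hwu.symm
      rw [halg, hM0]
      have hcard3 : 3 ≤ c.support.card := by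
        have hsub : ({u, w, v} : Finset G) ⊆ c.support := by
          intro x hx
          simp only [Finset.mem_insert, Finset.mem_singleton] at hx
          rcases hx with rfl | rfl | rfl <;> assumption
        have : ({u, w, v} : Finset G).card = 3 := by
          rw [Finset.card_insert_of_notMem (by simp [hwu.symm, Ne.symm hvu]),
            Finset.card_insert_of_notMem (by simpa using hvw.symm)]
          simp
        calc 3 = ({u, w, v} : Finset G).card := this.symm
          _ ≤ c.support.card := Finset.card_le_card hsub
      omega

lemma disjoint_of_support_subset {r x : Perm G} (h : _root_.Disjoint x.support r.support) :
    x.Disjoint r := disjoint_iff_disjoint_support.mpr h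

/-- general splitting: swapping two points of the same cycle decreases cycSum by 1. -/
lemma cycSum_swap_mul_of_sameCycle {σ : Perm G} {u v : G} (h : σ.SameCycle u v) (hvu : v ≠ u) :
    cycSum (Equiv.swap u v * σ) + 1 = cycSum σ := by
  have hu : σ u ≠ u := by
    intro hfixp
    obtain ⟨i, hi⟩ := h
    rw [zpow_apply_eq_self_of_apply_eq_self hfixp] at hi
    exact hvu hi.symm
  set c := σ.cycleOf u with hcdef
  have hcmem : c ∈ σ.cycleFactorsFinset := cycleOf_mem_cycleFactorsFinset_iff.mpr (mem_support.mpr hu)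
  have hccyc : c.IsCycle := isCycle_cycleOf σ hu
  have hu_in : u ∈ c.support := by
    rw [hcdef, mem_support_cycleOf_iff]; exact ⟨SameCycle.refl _ _, mem_support.mpr hu⟩
  have hv_in : v ∈ c.support := by
    rw [hcdef, mem_support_cycleOf_iff]; exact ⟨h, mem_support.mpr hu⟩
  obtain ⟨k, hkpos, _, hk⟩ := Equiv.Perm.SameCycle.exists_pow_eq σ h
  have hck : (c ^ k) u = v := by
    rw [hcdef, cycleOf_pow_apply_self, hk]
  have hsplit := cycSum_swap_cycle k hccyc hu_in hck hvu
  set r := σ * c⁻¹ with hrdef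
  have hdisj : r.Disjoint c := disjoint_mul_inv_of_mem_cycleFactorsFinset hcmem
  have hσ : σ = r * c := by rw [hrdef, inv_mul_cancel_right]
  have hrsupp : _root_.Disjoint r.support c.support := disjoint_iff_disjoint_support.mp hdisj
  have huv : u ≠ v := Ne.symm hvu
  have hswsupp : (Equiv.swap u v).support ⊆ c.support := by
    rw [support_swap huv]
    intro x hx
    simp only [Finset.mem_insert, Finset.mem_singleton] at hx
    rcases hx with rfl | rfl <;> assumption
  have hcomm : Commute (Equiv.swap u v) r :=
    (disjoint_of_support_subset (Finset.disjoint_of_subset_left hswsupp hrsupp.symm)).commute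
  have hstep : Equiv.swap u v * σ = r * (Equiv.swap u v * c) := by
    rw [hσ, ← mul_assoc, hcomm.eq, mul_assoc]
  have hdisj2 : r.Disjoint (Equiv.swap u v * c) := by
    apply Perm.Disjoint.symm
    apply disjoint_of_support_subset
    apply Finset.disjoint_of_subset_left _ hrsupp.symm
    calc (Equiv.swap u v * c).support ⊆ (Equiv.swap u v).support ∪ c.support := support_mul_le _ _
      _ ⊆ c.support := by rw [Finset.union_subset_iff]; exact ⟨hswsupp, subset_rfl⟩
  have hpeel : cycSum σ = cycSum r + (c.support.card - 1) := by
    rw [cycSum_peel hcmem, ← hrdef]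
  rw [hstep, cycSum_mul_of_disjoint hdisj2]
  omega

/-- flip: if u,v are in different cycles, then they are in the same cycle of `swap u v * σ`. -/
lemma sameCycle_swap_mul_of_not_sameCycle {σ : Perm G} {u v : G} (h : ¬ σ.SameCycle u v)
    (huv : u ≠ v) : (Equiv.swap u v * σ).SameCycle u v := by
  have hex : ∃ n, 0 < n ∧ (σ ^ n) u = u :=
    ⟨orderOf σ, orderOf_pos σ, by rw [pow_orderOf_eq_one]; rfl⟩
  set n0 := Nat.find hex with hn0def
  obtain ⟨hn0pos, hn0⟩ := Nat.find_spec hex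
  have hmin : ∀ j, 0 < j → j < n0 → (σ ^ j) u ≠ u := fun j hj hjn hju =>
    Nat.find_min hex hjn ⟨hj, hju⟩
  have claim : ∀ i < n0, ((Equiv.swap u v * σ) ^ i) u = (σ ^ i) u := by
    intro i hi
    induction i with
    | zero => simp
    | succ m ihm =>
      rw [pow_succ', mul_apply, ihm (by omega), mul_apply]
      have h1 : σ ((σ ^ m) u) = (σ ^ (m + 1)) u := by rw [← mul_apply, ← pow_succ']
      rw [h1]
      have h2 : (σ ^ (m + 1)) u ≠ u := hmin _ (by omega) (by omega)
      have h3 : (σ ^ (m + 1)) u ≠ v := fun hv => h ⟨((m : ℤ) + 1), by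
        rw [show ((m : ℤ) + 1) = ((m + 1 : ℕ) : ℤ) by push_cast; ring, zpow_natCast]; exact hv⟩
      exact Equiv.swap_apply_of_ne_of_ne h2 h3
  have hfin : ((Equiv.swap u v * σ) ^ n0) u = v := by
    rw [show n0 = (n0 - 1) + 1 by omega, pow_succ', mul_apply, claim _ (by omega), mul_apply]
    have h1 : σ ((σ ^ (n0 - 1)) u) = (σ ^ (n0 - 1 + 1)) u := by rw [← mul_apply, ← pow_succ']
    rw [h1, show n0 - 1 + 1 = n0 by omega, hn0, Equiv.swap_apply_left]
  exact ⟨(n0 : ℤ), by rw [zpow_natCast]; exact hfin⟩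

lemma cycSum_le_length : ∀ l : List (Perm G), (∀ τ ∈ l, τ.IsSwap) → cycSum l.prod ≤ l.length := by
  intro l
  induction l with
  | nil => simp [cycSum_one]
  | cons t l ih =>
    intro hl
    obtain ⟨u, v, huv, rfl⟩ := hl t List.mem_cons_self
    have hrest := ih (fun τ hτ => hl τ (List.mem_cons_of_mem _ hτ))
    rw [List.prod_cons, List.length_cons]
    by_cases hsc : (l.prod).SameCycle u v
    · have := cycSum_swap_mul_of_sameCycle hsc (Ne.symm huv)
      omega
    · have h1 := sameCycle_swap_mul_of_not_sameCycle hsc huv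
      have h2 := cycSum_swap_mul_of_sameCycle h1 (Ne.symm huv)
      rw [← mul_assoc, Equiv.swap_mul_self, one_mul] at h2
      omega

lemma permLength_le_cycSum : ∀ n, ∀ σ : Perm G, cycSum σ = n → permLength σ ≤ n := by
  intro n
  induction n using Nat.strong_induction_on with
  | _ n IH =>
  intro σ hσ
  by_cases h1 : σ = 1
  · subst h1; rw [permLength_one]; exact Nat.zero_le _
  · obtain ⟨u, hu⟩ : σ.support.Nonempty := by
      rw [Finset.nonempty_iff_ne_empty, Ne, support_eq_empty_iff]; exact h1
    have hu' : σ u ≠ u := mem_support.mp hu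
    have hsc : σ.SameCycle u (σ u) := ⟨1, by simp⟩
    have hsplit := cycSum_swap_mul_of_sameCycle hsc hu'
    obtain ⟨l, hlen, hsw, hprod⟩ := exists_swap_list (Equiv.swap u (σ u) * σ)
    have hIH := IH (cycSum (Equiv.swap u (σ u) * σ)) (by omega) _ rfl
    have hp : (Equiv.swap u (σ u) :: l).prod = σ := by
      rw [List.prod_cons, hprod, ← mul_assoc, Equiv.swap_mul_self, one_mul]
    have hs : ∀ τ ∈ (Equiv.swap u (σ u) :: l), τ.IsSwap := by
      intro τ hτ
      rcases List.mem_cons.mp hτ with rfl | hmem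
      · exact ⟨u, σ u, Ne.symm hu', rfl⟩
      · exact hsw τ hmem
    have := permLength_le hs hp
    simp only [List.length_cons, hlen] at this
    omega

lemma permLength_eq_cycSum (σ : Perm G) : permLength σ = cycSum σ := by
  refine le_antisymm (permLength_le_cycSum _ σ rfl) ?_
  obtain ⟨l, hlen, hsw, hprod⟩ := exists_swap_list σ
  rw [← hlen, ← hprod]
  exact cycSum_le_length l hsw

lemma permLength_swap {u v : G} (huv : u ≠ v) : permLength (Equiv.swap u v) = 1 := by
  rw [permLength_eq_cycSum]; exact cycSum_swap huv

lemma permLength_eq_zero_iff {σ : Perm G} : permLength σ = 0 ↔ σ = 1 := by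
  rw [permLength_eq_cycSum]
  constructor
  · intro h; by_contra h1; have := cycSum_pos h1; omega
  · intro h; subst h; exact cycSum_one

lemma permLength_mul_of_disjoint {a b : Perm G} (h : a.Disjoint b) :
    permLength (a * b) = permLength a + permLength b := by
  simp only [permLength_eq_cycSum]; exact cycSum_mul_of_disjoint h

lemma permLength_split {σ : Perm G} {u v : G} (h : σ.SameCycle u v) (hvu : v ≠ u) :
    permLength (Equiv.swap u v * σ) + 1 = permLength σ := by
  simp only [permLength_eq_cycSum]; exact cycSum_swap_mul_of_sameCycle h hvu

lemma geoLe_trans {a b c : Perm G} (hab : geoLe a b) (hbc : geoLe b c) : geoLe a c := by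
  unfold geoLe at *
  have h1 : permLength (a⁻¹ * c) ≤ permLength (a⁻¹ * b) + permLength (b⁻¹ * c) := by
    have := permLength_mul_le (a⁻¹ * b) (b⁻¹ * c)
    rw [mul_assoc, ← mul_assoc b b⁻¹, mul_inv_cancel, one_mul] at this
    exact this
  have h2 := permLength_triangle a c
  omega

lemma geoLe_swap {α : Perm G} {x y : G} (h : α.SameCycle x y) (hxy : x ≠ y) :
    geoLe (Equiv.swap x y) α := by
  unfold geoLe
  rw [permLength_swap hxy, Equiv.swap_inv]
  have := permLength_split h (Ne.symm hxy)
  omega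

lemma geoLe_sameCycle_apply {α σ : Perm G} (hge : geoLe α σ) (x : G) : σ.SameCycle x (α x) := by
  by_cases hx : α x = x
  · rw [hx]
  · have h1 : geoLe (Equiv.swap x (α x)) α := geoLe_swap ⟨1, by simp⟩ (Ne.symm hx)
    have h2 : geoLe (Equiv.swap x (α x)) σ := geoLe_trans h1 hge
    by_contra hnsc
    have h3 := sameCycle_swap_mul_of_not_sameCycle hnsc (Ne.symm hx)
    have h4 := permLength_split h3 hx
    unfold geoLe at h2
    rw [permLength_swap (Ne.symm hx), Equiv.swap_inv] at h2
    rw [← mul_assoc, Equiv.swap_mul_self, one_mul] at h4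
    omega

lemma geoLe_sameCycle {α σ : Perm G} (hge : geoLe α σ) {x y : G} (h : α.SameCycle x y) :
    σ.SameCycle x y := by
  obtain ⟨i, _, _, hi⟩ := Equiv.Perm.SameCycle.exists_pow_eq α h
  have key : ∀ n : ℕ, σ.SameCycle x ((α ^ n) x) := by
    intro n
    induction n with
    | zero => simpa using SameCycle.refl σ x
    | succ m ihm =>
      have hstep := geoLe_sameCycle_apply hge ((α ^ m) x)
      have h2 : α ((α ^ m) x) = (α ^ (m + 1)) x := by rw [← mul_apply, ← pow_succ']
      exact ihm.trans (h2 ▸ hstep)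
  rw [← hi]; exact key i

lemma geoLe_support_subset {α σ : Perm G} (hge : geoLe α σ) : α.support ⊆ σ.support := by
  intro x hx
  by_contra hns
  have hfixp : σ x = x := by simpa using hns
  obtain ⟨i, hi⟩ := geoLe_sameCycle_apply hge x
  rw [zpow_apply_eq_self_of_apply_eq_self hfixp] at hi
  exact (mem_support.mp hx) hi.symm

lemma decomp_core {σ α c β : Perm G} (hc : c ∈ σ.cycleFactorsFinset)
    (hβsupp : β.support ⊆ c.support)
    (hagree : ∀ x ∈ c.support, α x = β x)
    (hαsupp : α.support ⊆ σ.support) :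
    permLength α = permLength (α * β⁻¹) + permLength β ∧
    permLength (α⁻¹ * σ) = permLength ((α * β⁻¹)⁻¹ * (σ * c⁻¹)) + permLength (β⁻¹ * c) ∧
    permLength σ = permLength (σ * c⁻¹) + permLength c ∧
    (α * β⁻¹).support ⊆ (σ * c⁻¹).support ∧
    (∀ x ∉ c.support, (α * β⁻¹) x = α x) := by
  set r := σ * c⁻¹ with hrdef
  set a := α * β⁻¹ with hadef
  have hrc : σ = r * c := by rw [hrdef, inv_mul_cancel_right]
  have hdisj_rc : r.Disjoint c := disjoint_mul_inv_of_mem_cycleFactorsFinset hc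
  have hrcsupp : _root_.Disjoint r.support c.support := disjoint_iff_disjoint_support.mp hdisj_rc
  have hσsupp : σ.support = r.support ∪ c.support := by
    conv_lhs => rw [hrc]
    exact hdisj_rc.support_mul
  have hβmem : ∀ x ∈ c.support, β x ∈ c.support := by
    intro x hx
    by_cases hβx : β x = x
    · rwa [hβx]
    · exact hβsupp (apply_mem_support.mpr (mem_support.mpr hβx))
  have hβinv_fix : ∀ x ∉ c.support, β⁻¹ x = x := by
    intro x hx
    have : x ∉ β.support := fun h => hx (hβsupp h)
    rw [← support_inv] at this
    exact notMem_support.mp this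
  have hβinv_mem : ∀ x ∈ c.support, β⁻¹ x ∈ c.support := by
    intro x hx
    by_cases hβx : β⁻¹ x = x
    · rwa [hβx]
    · have h1 : x ∈ β⁻¹.support := mem_support.mpr hβx
      have h2 : β⁻¹ x ∈ β⁻¹.support := apply_mem_support.mpr h1
      rw [support_inv] at h2
      exact hβsupp h2
  have hafix : ∀ x ∈ c.support, a x = x := by
    intro x hx
    rw [hadef, mul_apply, hagree _ (hβinv_mem x hx), ← mul_apply, mul_inv_cancel, one_apply]
  have haoff : ∀ x ∉ c.support, a x = α x := by
    intro x hx
    rw [hadef, mul_apply, hβinv_fix x hx]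
  have hasupp_nc : ∀ x ∈ a.support, x ∉ c.support := by
    intro x hx hxc
    exact (mem_support.mp hx) (hafix x hxc)
  have hasupp : a.support ⊆ r.support := by
    intro x hx
    have h1 : x ∉ c.support := hasupp_nc x hx
    have h2 : α x ≠ x := by rw [← haoff x h1]; exact mem_support.mp hx
    have h3 : x ∈ σ.support := hαsupp (mem_support.mpr h2)
    rw [hσsupp] at h3
    rcases Finset.mem_union.mp h3 with h | h
    · exact h
    · exact absurd h h1
  have hdisj_aβ : a.Disjoint β := by
    apply disjoint_of_support_subset
    rw [Finset.disjoint_left]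
    intro x hx hxβ
    exact hasupp_nc x hx (hβsupp hxβ)
  have hαab : α = a * β := by
    ext x
    by_cases hx : x ∈ c.support
    · rw [mul_apply, hagree x hx, hafix _ (hβmem x hx)]
    · have hβx : β x = x := by
        by_contra h
        exact hx (hβsupp (mem_support.mpr h))
      rw [mul_apply, hβx, haoff x hx]
  have h1 : permLength α = permLength a + permLength β := by
    conv_lhs => rw [hαab]
    exact permLength_mul_of_disjoint hdisj_aβ
  have hdisj_βr : β⁻¹.Disjoint r := by
    apply disjoint_of_support_subset
    rw [support_inv]
    exact Finset.disjoint_of_subset_left hβsupp hrcsupp.symm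
  have heq : α⁻¹ * σ = (a⁻¹ * r) * (β⁻¹ * c) := by
    have hc1 : β⁻¹ * a⁻¹ = a⁻¹ * β⁻¹ := (hdisj_aβ.commute.inv_inv).symm.eq
    have hc2 : β⁻¹ * r = r * β⁻¹ := hdisj_βr.commute.eq
    calc α⁻¹ * σ = (β⁻¹ * a⁻¹) * (r * c) := by rw [hαab, mul_inv_rev, ← hrc]
      _ = a⁻¹ * (β⁻¹ * r) * c := by rw [hc1, mul_assoc a⁻¹ β⁻¹ (r * c), ← mul_assoc β⁻¹ r c,
          ← mul_assoc]
      _ = (a⁻¹ * r) * (β⁻¹ * c) := by rw [hc2, ← mul_assoc, mul_assoc (a⁻¹ * r) β⁻¹ c]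
  have hdisj_fin : (a⁻¹ * r).Disjoint (β⁻¹ * c) := by
    apply disjoint_of_support_subset
    rw [Finset.disjoint_left]
    intro x hx hx2
    have hx3 : x ∈ a⁻¹.support ∪ r.support := support_mul_le _ _ hx
    have hx4 : x ∈ β⁻¹.support ∪ c.support := support_mul_le _ _ hx2
    have hx5 : x ∈ c.support := by
      rcases Finset.mem_union.mp hx4 with h | h
      · rw [support_inv] at h; exact hβsupp h
      · exact h
    rcases Finset.mem_union.mp hx3 with h | h
    · rw [support_inv] at h; exact hasupp_nc x h hx5
    · exact Finset.disjoint_left.mp hrcsupp h hx5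
  have h2 : permLength (α⁻¹ * σ) = permLength (a⁻¹ * r) + permLength (β⁻¹ * c) := by
    rw [heq]
    exact permLength_mul_of_disjoint hdisj_fin
  have h3 : permLength σ = permLength r + permLength c := by
    conv_lhs => rw [hrc]
    exact permLength_mul_of_disjoint hdisj_rc
  exact ⟨h1, h2, h3, hasupp, haoff⟩

lemma geoLe_restrict {σ α : Perm G} (hge : geoLe α σ) {c : Perm G}
    (hc : c ∈ σ.cycleFactorsFinset) :
    ∃ β : Perm G, β.support ⊆ c.support ∧ geoLe β c ∧ ∀ x ∈ c.support, α x = β x := by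
  have hsuppα := geoLe_support_subset hge
  have hinv : ∀ x : G, x ∈ c.support ↔ α x ∈ c.support := by
    intro x
    constructor
    · intro hx
      by_cases hαx : α x = x
      · rwa [hαx]
      · have hsc := geoLe_sameCycle_apply hge x
        have hcx : c = σ.cycleOf x := cycle_is_cycleOf hx hc
        rw [hcx, mem_support_cycleOf_iff]
        exact ⟨hsc, mem_cycleFactorsFinset_support_le hc hx⟩
    · intro hx
      by_cases hαx : α x = x
      · rwa [← hαx]
      · have hsc := (geoLe_sameCycle_apply hge x).symm
        have hcx : c = σ.cycleOf (α x) := cycle_is_cycleOf hx hc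
        rw [hcx, mem_support_cycleOf_iff]
        exact ⟨hsc, mem_cycleFactorsFinset_support_le hc hx⟩
  set β := Equiv.Perm.ofSubtype (α.subtypePerm (fun x => (hinv x).symm)) with hβdef
  have hβ1 : ∀ x ∈ c.support, α x = β x := by
    intro x hx
    rw [hβdef, Equiv.Perm.ofSubtype_apply_of_mem (α.subtypePerm (fun x => (hinv x).symm)) hx]
    rfl
  have hβ2 : ∀ x ∉ c.support, β x = x := fun x hx =>
    Equiv.Perm.ofSubtype_apply_of_not_mem (α.subtypePerm (fun x => (hinv x).symm)) hx
  have hβsupp : β.support ⊆ c.support := by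
    intro x hx
    by_contra h
    exact (mem_support.mp hx) (hβ2 x h)
  obtain ⟨h1, h2, h3, _, _⟩ := decomp_core hc hβsupp hβ1 hsuppα
  have h4 := permLength_triangle (α * β⁻¹) (σ * c⁻¹)
  have h5 := permLength_triangle β c
  have hβle : geoLe β c := by unfold geoLe at hge ⊢; omega
  exact ⟨β, hβsupp, hβle, hβ1⟩

lemma geoLe_of_pieces : ∀ n, ∀ σ α : Perm G, σ.cycleFactorsFinset.card = n →
    α.support ⊆ σ.support →
    (∀ c ∈ σ.cycleFactorsFinset, ∃ β : Perm G, β.support ⊆ c.support ∧ geoLe β c ∧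
      ∀ x ∈ c.support, α x = β x) → geoLe α σ := by
  intro n
  induction n using Nat.strong_induction_on with
  | _ n IH =>
  intro σ α hn hsupp hpieces
  rcases Nat.eq_zero_or_pos n with rfl | hpos
  · have hσ : σ = 1 := by
      rw [← cycleFactorsFinset_eq_empty_iff]
      exact Finset.card_eq_zero.mp hn
    subst hσ
    have hα : α = 1 := by
      rw [← support_eq_empty_iff]
      rw [support_one] at hsupp
      exact Finset.subset_empty.mp hsupp
    subst hα
    unfold geoLe
    simp [permLength_one]
  · obtain ⟨c, hc⟩ : σ.cycleFactorsFinset.Nonempty := Finset.card_pos.mp (by omega)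
    obtain ⟨β, hβsupp, hβle, hβagree⟩ := hpieces c hc
    obtain ⟨h1, h2, h3, hasupp, haoff⟩ := decomp_core hc hβsupp hβagree hsupp
    have hrfac : (σ * c⁻¹).cycleFactorsFinset = σ.cycleFactorsFinset \ {c} :=
      cycleFactorsFinset_mul_inv_mem_eq_sdiff hc
    have hrcard : (σ * c⁻¹).cycleFactorsFinset.card = n - 1 := by
      rw [hrfac, Finset.card_sdiff_of_subset (Finset.singleton_subset_iff.mpr hc), hn]
      simp
    have hIH : geoLe (α * β⁻¹) (σ * c⁻¹) := by
      apply IH (n - 1) (by omega) _ _ hrcard hasupp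
      intro c' hc'
      rw [hrfac, Finset.mem_sdiff, Finset.mem_singleton] at hc'
      obtain ⟨hc'σ, hc'ne⟩ := hc'
      obtain ⟨β', hβ'supp, hβ'le, hβ'agree⟩ := hpieces c' hc'σ
      refine ⟨β', hβ'supp, hβ'le, fun x hx => ?_⟩
      have hdisj : c'.Disjoint c :=
        (cycleFactorsFinset_pairwise_disjoint σ) hc'σ hc hc'ne
      have hxc : x ∉ c.support :=
        Finset.disjoint_left.mp (disjoint_iff_disjoint_support.mp hdisj) hx
      rw [haoff x hxc]
      exact hβ'agree x hx
    unfold geoLe at hIH hβle ⊢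
    omega

lemma pow_mul_fix {σ : Perm G} {x : G} {k : ℕ} (h : (σ ^ k) x = x) (m : ℕ) :
    (σ ^ (k * m)) x = x := by
  induction m with
  | zero => simp
  | succ i ih => rw [Nat.mul_succ, pow_add, mul_apply, h, ih]

lemma pow_mod_fix {σ : Perm G} {x : G} {k : ℕ} (h : (σ ^ k) x = x) (j : ℕ) :
    (σ ^ (j % k)) x = (σ ^ j) x := by
  conv_rhs => rw [← Nat.mod_add_div j k]
  rw [pow_add, mul_apply, pow_mul_fix h]

lemma sameCycle_fix {α : Perm G} {x y : G} (hfixp : α x = x) (h : α.SameCycle x y) : y = x := by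
  obtain ⟨i, hi⟩ := h
  rw [zpow_apply_eq_self_of_apply_eq_self hfixp] at hi
  exact hi.symm

lemma geoLe_determination {α σ : Perm G} (hge : geoLe α σ) {x : G} (hx : α x ≠ x)
    {k : ℕ} (hk : 0 < k) (hsc : α.SameCycle x ((σ ^ k) x))
    (hmin : ∀ j, 0 < j → j < k → ¬ α.SameCycle x ((σ ^ j) x)) :
    α x = (σ ^ k) x := by
  set z := (σ ^ k) x with hzdef
  obtain ⟨j, hjpos, _, hj⟩ := Equiv.Perm.SameCycle.exists_pow_eq σ (geoLe_sameCycle_apply hge x)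
  have hzx : z ≠ x := by
    intro hzxe
    have hmod : (σ ^ (j % k)) x = α x := by rw [pow_mod_fix hzxe j, hj]
    have hr0 : j % k ≠ 0 := by
      intro h0
      rw [h0, pow_zero, one_apply] at hmod
      exact hx hmod.symm
    exact hmin (j % k) (by omega) (Nat.mod_lt j hk)
      (by rw [hmod]; exact ⟨1, by rw [zpow_one]⟩)
  by_contra hne
  have hscσ : σ.SameCycle x z := ⟨(k : ℤ), by rw [zpow_natCast]⟩
  have hsplitσ := permLength_split hscσ hzx
  have hsplitα := permLength_split hsc hzx
  have h2 : geoLe (Equiv.swap x z * α) (Equiv.swap x z * σ) := by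
    have hsimp : (Equiv.swap x z * α)⁻¹ * (Equiv.swap x z * σ) = α⁻¹ * σ := by
      rw [mul_inv_rev, mul_assoc α⁻¹ _ _, ← mul_assoc (Equiv.swap x z)⁻¹ _ σ,
        inv_mul_cancel, one_mul]
    unfold geoLe at hge ⊢
    rw [hsimp]
    omega
  have htαx : (Equiv.swap x z * α) x = α x := by
    rw [mul_apply]
    exact Equiv.swap_apply_of_ne_of_ne hx hne
  have h3 : (Equiv.swap x z * σ).SameCycle x (α x) := htαx ▸ geoLe_sameCycle_apply h2 x
  have horb : ∀ j : ℕ, ∃ i, i < k ∧ ((Equiv.swap x z * σ) ^ j) x = (σ ^ i) x := by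
    intro m
    induction m with
    | zero => exact ⟨0, hk, by simp⟩
    | succ m ihm =>
      obtain ⟨i, hik, hi⟩ := ihm
      have h4 : ((Equiv.swap x z * σ) ^ (m + 1)) x = Equiv.swap x z (σ ((σ ^ i) x)) := by
        rw [pow_succ', mul_apply, hi, mul_apply]
      have hσi : σ ((σ ^ i) x) = (σ ^ (i + 1)) x := by rw [← mul_apply, ← pow_succ']
      by_cases hik1 : i + 1 = k
      · refine ⟨0, hk, ?_⟩
        rw [h4, hσi, hik1, ← hzdef]
        simp
      · have hik1' : i + 1 < k := by omega
        refine ⟨i + 1, hik1', ?_⟩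
        rw [h4, hσi]
        have hne1 : (σ ^ (i + 1)) x ≠ x := by
          intro h
          exact hmin (i + 1) (by omega) hik1' (by rw [h])
        have hne2 : (σ ^ (i + 1)) x ≠ z := by
          intro h
          exact hmin (i + 1) (by omega) hik1' (by rw [h]; exact hsc)
        exact Equiv.swap_apply_of_ne_of_ne hne1 hne2
  obtain ⟨jn, _, _, hjn⟩ := Equiv.Perm.SameCycle.exists_pow_eq (Equiv.swap x z * σ) h3
  obtain ⟨i, hik, hi⟩ := horb jn
  have hαi : α x = (σ ^ i) x := by rw [← hjn, hi]
  rcases Nat.eq_zero_or_pos i with rfl | hipos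
  · rw [pow_zero, one_apply] at hαi
    exact hx hαi
  · exact hmin i hipos hik (by rw [← hαi]; exact ⟨1, by rw [zpow_one]⟩)

lemma geoLe_unique {σ α α' : Perm G} (h : geoLe α σ) (h' : geoLe α' σ)
    (hsame : ∀ x y, α.SameCycle x y ↔ α'.SameCycle x y) : α = α' := by
  ext x
  by_cases hx : α x = x
  · have hx' : α' x = x := by
      by_contra hcon
      have := (hsame x (α' x)).mpr ⟨1, by rw [zpow_one]⟩
      exact hcon (sameCycle_fix hx this)
    rw [hx, hx']
  · have hx' : α' x ≠ x := by
      intro hcon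
      have := (hsame x (α x)).mp ⟨1, by rw [zpow_one]⟩
      exact hx (sameCycle_fix hcon this)
    have hex : ∃ k, 0 < k ∧ α.SameCycle x ((σ ^ k) x) :=
      ⟨orderOf σ, orderOf_pos σ, by rw [pow_orderOf_eq_one]; simpa using SameCycle.refl α x⟩
    obtain ⟨hkpos, hksc⟩ := Nat.find_spec hex
    have hmin : ∀ j, 0 < j → j < Nat.find hex → ¬ α.SameCycle x ((σ ^ j) x) :=
      fun j hj hjk hcon => Nat.find_min hex hjk ⟨hj, hcon⟩
    have e1 := geoLe_determination h hx hkpos hksc hmin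
    have e2 := geoLe_determination h' hx' hkpos ((hsame _ _).mp hksc)
      (fun j hj hjk hcon => hmin j hj hjk ((hsame _ _).mpr hcon))
    rw [e1, e2]


/-- A permutation `α` satisfies `α ≤ σ` in the geodesic order if and only if `α` is the
disjoint union of permutations `α_i`, one for each cycle `c_i` of `σ`, where `α_i` is
supported on the support of `c_i` and `α_i ≤ c_i`.  Moreover elements below `σ` are uniquely
determined by their orbit partitions. -/
theorem geoLe_cycle_decomposition {p : ℕ} (σ α : Equiv.Perm (Fin p)) :
    (geoLe α σ ↔
      (α.support ⊆ σ.support ∧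
        ∀ c ∈ σ.cycleFactorsFinset, ∃ β : Equiv.Perm (Fin p),
          β.support ⊆ c.support ∧ geoLe β c ∧ ∀ x ∈ c.support, α x = β x)) ∧
    (∀ α' : Equiv.Perm (Fin p), geoLe α σ → geoLe α' σ →
      (∀ x y : Fin p, α.SameCycle x y ↔ α'.SameCycle x y) → α = α') := by
  constructor
  · constructor
    · intro hge
      exact ⟨geoLe_support_subset hge, fun c hc => geoLe_restrict hge hc⟩
    · rintro ⟨h1, h2⟩
      exact geoLe_of_pieces _ σ α rfl h1 h2
  · intro α' hge hge' hsame
    exact geoLe_unique hge hge' hsame
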